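/- Let (X, Σ, μ) and (Y, Γ, ν) be strictly localizable measure spaces, T : L¹(X, μ) → L¹(Y, ν) bounded, and Π ⊆ Θ ⊆ Y measurable sets of finite measure. Then α_Θ(T) ≤ α_Π(T), where α_Θ(T) = limsup_{ν(B)→0, B⊆Θ} ‖χ_{Y∖Θ}T + χ_B T‖. -/
import Mathlib


open MeasureTheory

/-- A measure space is *strictly localizable* if it decomposes into a partition of
measurable sets of finite measure which determines measurability and measure. -/
def StrictlyLocalizable {Y : Type*} [MeasurableSpace Y] (ν : Measure Y) : Prop :=
  ∃ (ι : Type) (Y' : ι → Set Y),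
    Pairwise (Function.onFun Disjoint Y') ∧
    (⋃ i, Y' i) = Set.univ ∧
    (∀ i, MeasurableSet (Y' i) ∧ ν (Y' i) < ⊤) ∧
    (∀ A : Set Y, (∀ i, MeasurableSet (A ∩ Y' i)) → MeasurableSet A) ∧
    (∀ A : Set Y, MeasurableSet A → ν A = ∑' i, ν (A ∩ Y' i))

/-- An operator between normed spaces is weakly compact if the image of the closed unit
ball is contained in a weakly compact set. -/
def IsWeaklyCompactOperator {E F : Type*} [NormedAddCommGroup E] [NormedSpace ℝ E]
    [NormedAddCommGroup F] [NormedSpace ℝ F] (T : E →L[ℝ] F) : Prop :=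
  ∃ C : Set (WeakSpace ℝ F), IsCompact C ∧
    ∀ x ∈ Metric.closedBall (0 : E) 1, toWeakSpace ℝ F (T x) ∈ C

/-- The norm of `χ_S ∘ T`, i.e. the supremum over the unit ball of the `L¹`-norm of `T f`
restricted to the measurable set `S`. -/
noncomputable def opNormOn {X Y : Type*} [MeasurableSpace X] [MeasurableSpace Y]
    {μ : Measure X} {ν : Measure Y} (T : Lp ℝ 1 μ →L[ℝ] Lp ℝ 1 ν) (S : Set Y) : ℝ :=
  sSup {r : ℝ | ∃ f : Lp ℝ 1 μ, ‖f‖ ≤ 1 ∧ r = ∫ y in S, |(T f : Y → ℝ) y| ∂ν}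

/-- The localized measure of weak noncompactness
`α_Θ(T) = limsup_{ν(B) → 0, B ⊆ Θ} ‖χ_{Y∖Θ} T + χ_B T‖`, expressed as an infimum over
`δ > 0` of suprema over measurable `B ⊆ Θ` with `ν B < δ`. -/
noncomputable def alphaTheta {X Y : Type*} [MeasurableSpace X] [MeasurableSpace Y]
    {μ : Measure X} {ν : Measure Y} (T : Lp ℝ 1 μ →L[ℝ] Lp ℝ 1 ν) (Θ : Set Y) : ℝ :=
  sInf {r : ℝ | ∃ δ : ℝ, 0 < δ ∧
    r = sSup {s : ℝ | ∃ B : Set Y, B ⊆ Θ ∧ MeasurableSet B ∧ ν B < ENNReal.ofReal δ ∧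
      s = opNormOn T (Θᶜ ∪ B)}}

/-- The distance from `T` to the weakly compact operators whose range is (a.e.) supported
in `Θ`. -/
noncomputable def weakEssNormOn {X Y : Type*} [MeasurableSpace X] [MeasurableSpace Y]
    {μ : Measure X} {ν : Measure Y} (T : Lp ℝ 1 μ →L[ℝ] Lp ℝ 1 ν) (Θ : Set Y) : ℝ :=
  sInf {r : ℝ | ∃ W : Lp ℝ 1 μ →L[ℝ] Lp ℝ 1 ν, IsWeaklyCompactOperator W ∧
    (∀ f : Lp ℝ 1 μ, ∀ᵐ y ∂ν, y ∉ Θ → (W f : Y → ℝ) y = 0) ∧ r = ‖T - W‖}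

section AuxLemmas
variable {X Y : Type*} [MeasurableSpace X] [MeasurableSpace Y]
  {μ : Measure X} {ν : Measure Y}

lemma setIntegral_abs_le_norm' (f : Lp ℝ 1 ν) (S : Set Y) :
    ∫ y in S, |(f : Y → ℝ) y| ∂ν ≤ ‖f‖ := by
  have h1 : ∫ y in S, |(f : Y → ℝ) y| ∂ν ≤ ∫ y, |(f : Y → ℝ) y| ∂ν :=
    setIntegral_le_integral (L1.integrable_coeFn f).abs
      (Filter.Eventually.of_forall fun y => abs_nonneg _)
  have h2 : ‖f‖ = ∫ y, |(f : Y → ℝ) y| ∂ν := by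
    simpa [Real.norm_eq_abs] using L1.norm_eq_integral_norm f
  linarith

lemma opNormOn_bddAbove (T : Lp ℝ 1 μ →L[ℝ] Lp ℝ 1 ν) (S : Set Y) :
    BddAbove {r : ℝ | ∃ f : Lp ℝ 1 μ, ‖f‖ ≤ 1 ∧ r = ∫ y in S, |(T f : Y → ℝ) y| ∂ν} := by
  refine ⟨‖T‖, fun r hr => ?_⟩
  obtain ⟨f, hf, rfl⟩ := hr
  calc ∫ y in S, |(T f : Y → ℝ) y| ∂ν ≤ ‖T f‖ := setIntegral_abs_le_norm' (T f) S
    _ ≤ ‖T‖ * ‖f‖ := T.le_opNorm f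
    _ ≤ ‖T‖ := mul_le_of_le_one_right (norm_nonneg T) hf

lemma opNormOn_zero_mem (T : Lp ℝ 1 μ →L[ℝ] Lp ℝ 1 ν) (S : Set Y) :
    (0 : ℝ) ∈ {r : ℝ | ∃ f : Lp ℝ 1 μ, ‖f‖ ≤ 1 ∧ r = ∫ y in S, |(T f : Y → ℝ) y| ∂ν} := by
  refine ⟨0, by simp, ?_⟩
  rw [map_zero]
  have h : ∀ᵐ y ∂(ν.restrict S), |((0 : Lp ℝ 1 ν) : Y → ℝ) y| = 0 :=
    (ae_restrict_of_ae (Lp.coeFn_zero ℝ 1 ν)).mono fun y hy => by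
      simp only [abs_eq_zero]; simpa using hy
  rw [integral_congr_ae h, integral_zero]

lemma opNormOn_nonneg (T : Lp ℝ 1 μ →L[ℝ] Lp ℝ 1 ν) (S : Set Y) :
    0 ≤ opNormOn T S :=
  le_csSup (opNormOn_bddAbove T S) (opNormOn_zero_mem T S)

lemma opNormOn_le_norm (T : Lp ℝ 1 μ →L[ℝ] Lp ℝ 1 ν) (S : Set Y) :
    opNormOn T S ≤ ‖T‖ := by
  refine Real.sSup_le (fun r hr => ?_) (norm_nonneg T)
  obtain ⟨f, hf, rfl⟩ := hr
  calc ∫ y in S, |(T f : Y → ℝ) y| ∂ν ≤ ‖T f‖ := setIntegral_abs_le_norm' (T f) S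
    _ ≤ ‖T‖ * ‖f‖ := T.le_opNorm f
    _ ≤ ‖T‖ := mul_le_of_le_one_right (norm_nonneg T) hf

lemma opNormOn_mono (T : Lp ℝ 1 μ →L[ℝ] Lp ℝ 1 ν) {S₁ S₂ : Set Y} (h : S₁ ⊆ S₂) :
    opNormOn T S₁ ≤ opNormOn T S₂ := by
  refine Real.sSup_le (fun r hr => ?_) (opNormOn_nonneg T S₂)
  obtain ⟨f, hf, rfl⟩ := hr
  calc ∫ y in S₁, |(T f : Y → ℝ) y| ∂ν
      ≤ ∫ y in S₂, |(T f : Y → ℝ) y| ∂ν :=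
        setIntegral_mono_set (L1.integrable_coeFn (T f)).abs.integrableOn
          (Filter.Eventually.of_forall fun y => abs_nonneg _)
          (HasSubset.Subset.eventuallyLE h)
    _ ≤ opNormOn T S₂ := le_csSup (opNormOn_bddAbove T S₂) ⟨f, hf, rfl⟩

/-- The inner supremum set for a fixed `δ`. -/
lemma innerSet_props (T : Lp ℝ 1 μ →L[ℝ] Lp ℝ 1 ν) (Θ : Set Y) {δ : ℝ} (hδ : 0 < δ) :
    (opNormOn T (Θᶜ ∪ (∅ : Set Y)) ∈
      {s : ℝ | ∃ B : Set Y, B ⊆ Θ ∧ MeasurableSet B ∧ ν B < ENNReal.ofReal δ ∧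
        s = opNormOn T (Θᶜ ∪ B)}) ∧
    BddAbove {s : ℝ | ∃ B : Set Y, B ⊆ Θ ∧ MeasurableSet B ∧ ν B < ENNReal.ofReal δ ∧
        s = opNormOn T (Θᶜ ∪ B)} := by
  constructor
  · exact ⟨∅, Set.empty_subset _, MeasurableSet.empty,
      by simpa using ENNReal.ofReal_pos.mpr hδ, rfl⟩
  · refine ⟨‖T‖, fun s hs => ?_⟩
    obtain ⟨B, _, _, _, rfl⟩ := hs
    exact opNormOn_le_norm T _

lemma innerSup_nonneg (T : Lp ℝ 1 μ →L[ℝ] Lp ℝ 1 ν) (Θ : Set Y) {δ : ℝ} (hδ : 0 < δ) :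
    0 ≤ sSup {s : ℝ | ∃ B : Set Y, B ⊆ Θ ∧ MeasurableSet B ∧ ν B < ENNReal.ofReal δ ∧
        s = opNormOn T (Θᶜ ∪ B)} :=
  le_trans (opNormOn_nonneg T _) (le_csSup (innerSet_props T Θ hδ).2 (innerSet_props T Θ hδ).1)

end AuxLemmas

/-- Monotonicity of the localized measure of weak noncompactness:
if `Π ⊆ Θ` are measurable sets of finite measure, then `α_Θ(T) ≤ α_Π(T)`. -/
theorem alphaTheta_antitone
    {X Y : Type*} [MeasurableSpace X] [MeasurableSpace Y]
    (μ : Measure X) (ν : Measure Y)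
    (hμ : StrictlyLocalizable μ) (hν : StrictlyLocalizable ν)
    (T : Lp ℝ 1 μ →L[ℝ] Lp ℝ 1 ν)
    (P Θ : Set Y) (hPΘ : P ⊆ Θ)
    (hP : MeasurableSet P) (hPfin : ν P < ⊤)
    (hΘ : MeasurableSet Θ) (hΘfin : ν Θ < ⊤) :
    alphaTheta T Θ ≤ alphaTheta T P := by
  rw [alphaTheta, alphaTheta]
  refine le_csInf ⟨_, 1, one_pos, rfl⟩ ?_
  rintro b ⟨δ, hδ, rfl⟩
  have hbelow : BddBelow {r : ℝ | ∃ δ : ℝ, 0 < δ ∧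
      r = sSup {s : ℝ | ∃ B : Set Y, B ⊆ Θ ∧ MeasurableSet B ∧ ν B < ENNReal.ofReal δ ∧
        s = opNormOn T (Θᶜ ∪ B)}} := by
    refine ⟨0, ?_⟩
    rintro r ⟨δ', hδ', rfl⟩
    exact innerSup_nonneg T Θ hδ'
  have h1 : sInf {r : ℝ | ∃ δ : ℝ, 0 < δ ∧
      r = sSup {s : ℝ | ∃ B : Set Y, B ⊆ Θ ∧ MeasurableSet B ∧ ν B < ENNReal.ofReal δ ∧
        s = opNormOn T (Θᶜ ∪ B)}} ≤
      sSup {s : ℝ | ∃ B : Set Y, B ⊆ Θ ∧ MeasurableSet B ∧ ν B < ENNReal.ofReal δ ∧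
        s = opNormOn T (Θᶜ ∪ B)} :=
    csInf_le hbelow ⟨δ, hδ, rfl⟩
  refine h1.trans ?_
  refine Real.sSup_le ?_ (innerSup_nonneg T P hδ)
  rintro s ⟨B, hBΘ, hBm, hBν, rfl⟩
  have hsub : Θᶜ ∪ B ⊆ Pᶜ ∪ (B ∩ P) := by
    rintro y (hy | hy)
    · exact Or.inl fun h => hy (hPΘ h)
    · by_cases h : y ∈ P
      · exact Or.inr ⟨hy, h⟩
      · exact Or.inl h
  calc opNormOn T (Θᶜ ∪ B) ≤ opNormOn T (Pᶜ ∪ (B ∩ P)) := opNormOn_mono T hsub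
    _ ≤ _ := le_csSup (innerSet_props T P hδ).2
        ⟨B ∩ P, Set.inter_subset_right, hBm.inter hP,
          (measure_mono Set.inter_subset_left).trans_lt hBν, rfl⟩
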